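/- arXiv:2502.03154 — 6 statements merged into one kernel-verified Lean document; each statement's English description precedes it below -/
import Mathlib

section
/- If {a_n} is an increasing sequence of real numbers with a_n > n^{1+ε} for some ε > 0 and all n ∈ ℕ, then for all N ∈ ℕ, the tail sum ∑_{n=N}^∞ 1/a_n is strictly less than (2 + 1/ε) / a_N^{ε/(1+ε)}. -/
/-!
Put `B = a_N ^ (1/(1+ε))`, so that `a_N = B ^ (1+ε)` and `B > N`, and cut the series at
`M = ⌈B⌉`. The `M - N ≤ B` terms before the cut are each at most `1/a_N`, so together at most
`B ^ (-ε)`. Beyond the cut, `1/a_n < n ^ (-(1+ε))`, and by the integral test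
`∑_{n ≥ M} n ^ (-(1+ε)) ≤ M ^ (-(1+ε)) + M ^ (-ε)/ε ≤ B ^ (-ε) + B ^ (-ε)/ε`.
-/

open Real Set Finset

lemma one_div_lt_rpow_neg_of_rpow_lt {x y s : ℝ} (hx : 0 < x) (h : x ^ s < y) :
    1 / y < x ^ (-s) := by
  rw [rpow_neg hx.le, ← one_div]
  exact one_div_lt_one_div_of_lt (rpow_pos_of_pos hx s) h

section RpowTail

variable {ε : ℝ}

lemma summable_nat_add_rpow_neg (hε : 0 < ε) (M : ℕ) :
    Summable fun n : ℕ => ((n + M : ℕ) : ℝ) ^ (-(1 + ε)) :=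
  (summable_nat_add_iff M).2 (summable_nat_rpow.2 (by linarith))

lemma tsum_nat_add_add_one_rpow_neg_le (hε : 0 < ε) {M : ℕ} (hM : 0 < M) :
    ∑' n : ℕ, ((n + M + 1 : ℕ) : ℝ) ^ (-(1 + ε)) ≤ (M : ℝ) ^ (-ε) / ε := by
  have hM' : (0 : ℝ) < M := by exact_mod_cast hM
  have anti : AntitoneOn (fun x : ℝ => x ^ (-(1 + ε))) (Ici (M : ℝ)) :=
    (antitoneOn_rpow_Ioi_of_exponent_nonpos (by linarith)).mono fun x hx => hM'.trans_le hx
  calc _ ≤ ∫ x in Ioi (M : ℝ), x ^ (-(1 + ε)) :=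
        anti.tsum_comp_add_le_integral M (integrableOn_Ioi_rpow_of_lt (by linarith) hM')
          fun t ht => rpow_nonneg (hM'.trans ht).le _
    _ = (M : ℝ) ^ (-ε) / ε := by
        rw [integral_Ioi_rpow_of_lt (by linarith) hM', show -(1 + ε) + 1 = -ε by ring]
        ring

lemma tsum_nat_add_rpow_neg_le (hε : 0 < ε) {M : ℕ} (hM : 0 < M) :
    ∑' n : ℕ, ((n + M : ℕ) : ℝ) ^ (-(1 + ε)) ≤ (M : ℝ) ^ (-(1 + ε)) + (M : ℝ) ^ (-ε) / ε := by
  rw [(summable_nat_add_rpow_neg hε M).tsum_eq_zero_add]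
  simp only [zero_add, add_right_comm _ 1 M]
  exact add_le_add_right (tsum_nat_add_add_one_rpow_neg_le hε hM) _

end RpowTail

section GrowingSequence

variable {ε : ℝ} {a : ℕ → ℝ}

lemma summable_one_div_nat_add (hε : 0 < ε)
    (hgt : ∀ n : ℕ, 1 ≤ n → (n : ℝ) ^ (1 + ε) < a n) {M : ℕ} (hM : 1 ≤ M) :
    Summable fun n => 1 / a (n + M) := by
  refine .of_nonneg_of_le (fun n => ?_) (fun n => (one_div_lt_rpow_neg_of_rpow_lt (by positivity) (hgt _ (by omega))).le)
    (summable_nat_add_rpow_neg hε M)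
  exact (one_div_pos.2 ((rpow_pos_of_pos (by positivity) _).trans (hgt _ (by omega)))).le

lemma tsum_one_div_nat_add_lt (hε : 0 < ε) (hgt : ∀ n : ℕ, 1 ≤ n → (n : ℝ) ^ (1 + ε) < a n)
    {M : ℕ} (hM : 1 ≤ M) :
    ∑' n : ℕ, 1 / a (n + M) < (M : ℝ) ^ (-(1 + ε)) + (M : ℝ) ^ (-ε) / ε := by
  have hlt : ∀ n, 1 / a (n + M) < ((n + M : ℕ) : ℝ) ^ (-(1 + ε)) := fun n =>
    one_div_lt_rpow_neg_of_rpow_lt (Nat.cast_pos.2 (by omega)) (hgt _ (by omega))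
  calc _ < ∑' n : ℕ, ((n + M : ℕ) : ℝ) ^ (-(1 + ε)) :=
        (summable_one_div_nat_add hε hgt hM).tsum_lt_tsum (fun n => (hlt n).le) (hlt 0)
          (summable_nat_add_rpow_neg hε M)
    _ ≤ _ := tsum_nat_add_rpow_neg_le hε hM

lemma sum_range_one_div_le (hmono : Monotone a) {N : ℕ} (haN : 0 < a N) (k : ℕ) :
    ∑ i ∈ range k, 1 / a (i + N) ≤ k / a N := by
  calc _ ≤ ∑ _i ∈ range k, 1 / a N :=
        sum_le_sum fun i _ => one_div_le_one_div_of_le haN (hmono (Nat.le_add_left N i))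
    _ = k / a N := by simp [div_eq_mul_inv]

lemma tsum_one_div_lt_of_le (hε : 0 < ε) (hmono : Monotone a)
    (hgt : ∀ n : ℕ, 1 ≤ n → (n : ℝ) ^ (1 + ε) < a n) {N M : ℕ} (hN : 1 ≤ N) (hNM : N ≤ M) :
    ∑' n : ℕ, 1 / a (N + n) <
      ((M - N : ℕ) : ℝ) / a N + (M : ℝ) ^ (-(1 + ε)) + (M : ℝ) ^ (-ε) / ε := by
  have haN : 0 < a N := lt_of_le_of_lt (by positivity) (hgt N hN)
  have hsplit := (summable_one_div_nat_add hε hgt hN).sum_add_tsum_nat_add (M - N)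
  simp only [add_assoc, Nat.sub_add_cancel hNM] at hsplit
  simp only [add_comm N, ← hsplit]
  linarith [sum_range_one_div_le hmono haN (M - N), tsum_one_div_nat_add_lt hε hgt (hN.trans hNM)]

end GrowingSequence

lemma div_rpow_add_rpow_neg_add_rpow_neg_div_le {ε B m k : ℝ} (hε : 0 < ε) (hB : 1 ≤ B)
    (hBm : B ≤ m) (hk : k ≤ B) :
    k / B ^ (1 + ε) + m ^ (-(1 + ε)) + m ^ (-ε) / ε ≤ (2 + 1 / ε) * B ^ (-ε) := by
  have hB0 : 0 < B := by linarith
  have hmB : ∀ s : ℝ, 0 ≤ s → m ^ (-s) ≤ B ^ (-s) := fun s hs =>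
    rpow_le_rpow_of_nonpos hB0 hBm (by linarith)
  have hkB : k / B ^ (1 + ε) ≤ B ^ (-ε) := by
    calc _ ≤ B / B ^ (1 + ε) := div_le_div_of_nonneg_right hk (by positivity)
      _ = B ^ (-ε) := by
        rw [rpow_add hB0, rpow_one, rpow_neg hB0.le, div_mul_cancel_left₀ hB0.ne']
  have hBε : B ^ (-(1 + ε)) ≤ B ^ (-ε) := rpow_le_rpow_of_exponent_le hB (by linarith)
  have hdiv := div_le_div_of_nonneg_right (hmB ε hε.le) hε.le
  have hmul : (2 + 1 / ε) * B ^ (-ε) = 2 * B ^ (-ε) + B ^ (-ε) / ε := by ring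
  linarith [hmB (1 + ε) (by linarith)]

/-- tail sum bound for series of reciprocals of an increasing
sequence growing faster than `n ^ (1+ε)` (sequence indexed from 1). -/
theorem stmt0 (ε : ℝ) (hε : 0 < ε) (a : ℕ → ℝ) (hmono : Monotone a)
    (hgt : ∀ n : ℕ, 1 ≤ n → (n : ℝ) ^ (1 + ε) < a n) :
    ∀ N : ℕ, 1 ≤ N →
      (∑' n : ℕ, 1 / a (N + n)) < (2 + 1 / ε) / a N ^ (ε / (1 + ε)) := by
  intro N hN
  have hN1 : (1 : ℝ) ≤ N := by exact_mod_cast hN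
  have haN : 0 < a N := lt_of_le_of_lt (by positivity) (hgt N hN)
  set B := a N ^ (1 + ε)⁻¹
  have hB0 : 0 ≤ B := by positivity
  have haB : a N = B ^ (1 + ε) := by
    rw [← rpow_mul haN.le, inv_mul_cancel₀ (by linarith), rpow_one]
  have hNB : (N : ℝ) < B := by
    have := hgt N hN
    rwa [haB, rpow_lt_rpow_iff (Nat.cast_nonneg N) hB0 (by linarith)] at this
  set M := ⌈B⌉₊
  have hBM : B ≤ M := Nat.le_ceil B
  have hNM : N ≤ M := by exact_mod_cast hNB.le.trans hBM
  have hcount : ((M - N : ℕ) : ℝ) ≤ B := by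
    rw [Nat.cast_sub hNM]
    linarith [Nat.ceil_lt_add_one hB0]
  calc _ < ((M - N : ℕ) : ℝ) / a N + (M : ℝ) ^ (-(1 + ε)) + (M : ℝ) ^ (-ε) / ε :=
        tsum_one_div_lt_of_le hε hmono hgt hN hNM
    _ ≤ (2 + 1 / ε) * B ^ (-ε) := by
        rw [haB]
        exact div_rpow_add_rpow_neg_add_rpow_neg_div_le hε (by linarith) hBM hcount
    _ = (2 + 1 / ε) / a N ^ (ε / (1 + ε)) := by
        rw [haB, ← rpow_mul hB0, mul_div_cancel₀ _ (by linarith : (1 + ε) ≠ 0), rpow_neg hB0]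
        ring
end

section
/- If {a_n} is a sequence of real numbers with limsup_{n→∞} a_n = ∞, then for infinitely many N ∈ ℕ one has a_{N+1} > (1 + 1/N²) · max_{1 ≤ n ≤ N} a_n. -/
private lemma sup'_set_congr {β : Type*} (f : β → ℝ) {s t : Finset β} (h : s = t)
    (hs : s.Nonempty) : s.sup' hs f = t.sup' (h ▸ hs) f := by subst h; rfl

/-- if `limsup a = ∞`, then for infinitely many `N`,
`a (N+1) > (1 + 1/N²) · max_{1 ≤ n ≤ N} a n`. -/
theorem stmt1 (a : ℕ → ℝ)
    (h : Filter.limsup (fun n => (a n : EReal)) Filter.atTop = ⊤) :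
    {N : ℕ | ∃ h1 : 1 ≤ N,
      a (N + 1) >
        (1 + 1 / (N : ℝ) ^ 2) *
          (Finset.Icc 1 N).sup' (Finset.nonempty_Icc.mpr h1) a}.Infinite := by
  set S := {N : ℕ | ∃ h1 : 1 ≤ N,
      a (N + 1) >
        (1 + 1 / (N : ℝ) ^ 2) *
          (Finset.Icc 1 N).sup' (Finset.nonempty_Icc.mpr h1) a} with hS
  by_contra hinf
  have hfin : S.Finite := Set.not_infinite.mp hinf
  obtain ⟨N₀, hN₀⟩ := hfin.bddAbove
  simp only [upperBounds, Set.mem_setOf_eq] at hN₀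
  -- the running max, defined for all N (junk value for N = 0)
  set M : ℕ → ℝ := fun N =>
    if hN : 1 ≤ N then (Finset.Icc 1 N).sup' (Finset.nonempty_Icc.mpr hN) a else a 1 with hMdef
  have hMpos : ∀ (N : ℕ) (hN : 1 ≤ N),
      M N = (Finset.Icc 1 N).sup' (Finset.nonempty_Icc.mpr hN) a := by
    intro N hN; simp [hMdef, dif_pos hN]
  have hstep : ∀ N : ℕ, 1 ≤ N → M (N + 1) = a (N + 1) ⊔ M N := by
    intro N hN
    rw [hMpos N hN, hMpos (N + 1) (by omega),
      sup'_set_congr a (Finset.insert_Icc_right_eq_Icc_add_one (show (1:ℕ) ≤ N + 1 by omega)).symm,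
      Finset.sup'_insert]
  -- from finiteness: eventually no jump
  have hbound : ∀ N : ℕ, N₀ < N → a (N + 1) ≤ (1 + 1 / (N : ℝ) ^ 2) * M N := by
    intro N hN
    have h1 : 1 ≤ N := by omega
    have hnot : N ∉ S := fun hmem => absurd (hN₀ hmem) (by omega)
    rw [hS, Set.mem_setOf_eq] at hnot
    push_neg at hnot
    have := hnot h1
    rw [hMpos N h1]
    exact this
  set P : ℕ → ℝ := fun N => M N ⊔ 1 with hPdef
  have hP1 : ∀ N, (1 : ℝ) ≤ P N := fun N => le_sup_right
  set K := N₀ + 2 with hK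
  have hPstep : ∀ N : ℕ, K ≤ N → P (N + 1) ≤ (1 + 1 / (N : ℝ) ^ 2) * P N := by
    intro N hN
    have h1 : 1 ≤ N := by omega
    have hfac : (1 : ℝ) ≤ 1 + 1 / (N : ℝ) ^ 2 := by
      have : (0:ℝ) ≤ 1 / (N : ℝ) ^ 2 := by positivity
      linarith
    have hMP : M N ≤ P N := le_sup_left
    have hPpos : (0 : ℝ) < P N := lt_of_lt_of_le one_pos (hP1 N)
    have key : a (N + 1) ≤ (1 + 1 / (N : ℝ) ^ 2) * P N := by
      calc a (N + 1) ≤ (1 + 1 / (N : ℝ) ^ 2) * M N := hbound N (by omega)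
        _ ≤ (1 + 1 / (N : ℝ) ^ 2) * P N := by
            apply mul_le_mul_of_nonneg_left hMP (by positivity)
    have key2 : M N ≤ (1 + 1 / (N : ℝ) ^ 2) * P N :=
      le_trans hMP (le_mul_of_one_le_left (le_of_lt hPpos) hfac)
    have key3 : (1 : ℝ) ≤ (1 + 1 / (N : ℝ) ^ 2) * P N :=
      le_trans (hP1 N) (le_mul_of_one_le_left (le_of_lt hPpos) hfac)
    simp only [hPdef]
    rw [hstep N h1]
    exact sup_le (sup_le key key2) key3
  set C := P K * Real.exp (1 / ((K : ℝ) - 1)) with hC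
  have hQ : ∀ N : ℕ, K ≤ N → P N * Real.exp (1 / ((N : ℝ) - 1)) ≤ C := by
    intro N hN
    induction N, hN using Nat.le_induction with
    | base => exact le_of_eq rfl
    | succ N hN ih =>
      have h2 : (2 : ℕ) ≤ N := by omega
      have h2r : (2 : ℝ) ≤ (N : ℝ) := by exact_mod_cast h2
      have hN1pos : (0 : ℝ) < (N : ℝ) - 1 := by linarith
      have hNpos : (0 : ℝ) < (N : ℝ) := by linarith
      have hcast : ((N + 1 : ℕ) : ℝ) - 1 = (N : ℝ) := by push_cast; try ring
      rw [hcast]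
      have hexp : (1 + 1 / (N : ℝ) ^ 2) * Real.exp (1 / (N : ℝ)) ≤
          Real.exp (1 / ((N : ℝ) - 1)) := by
        have h1 : (1 : ℝ) + 1 / (N : ℝ) ^ 2 ≤ Real.exp (1 / ((N : ℝ) - 1) - 1 / (N : ℝ)) := by
          have hdiff : 1 / ((N : ℝ) - 1) - 1 / (N : ℝ) = 1 / (((N : ℝ) - 1) * (N : ℝ)) := by
            field_simp; try ring
          have hmono : 1 / (N : ℝ) ^ 2 ≤ 1 / (((N : ℝ) - 1) * (N : ℝ)) := by
            apply one_div_le_one_div_of_le (by positivity)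
            nlinarith
          calc (1 : ℝ) + 1 / (N : ℝ) ^ 2 ≤ 1 + 1 / (((N : ℝ) - 1) * (N : ℝ)) := by linarith
            _ = (1 / ((N : ℝ) - 1) - 1 / (N : ℝ)) + 1 := by rw [hdiff]; ring
            _ ≤ _ := Real.add_one_le_exp _
        calc (1 + 1 / (N : ℝ) ^ 2) * Real.exp (1 / (N : ℝ))
            ≤ Real.exp (1 / ((N : ℝ) - 1) - 1 / (N : ℝ)) * Real.exp (1 / (N : ℝ)) := by
              apply mul_le_mul_of_nonneg_right h1 (Real.exp_pos _).le
          _ = Real.exp (1 / ((N : ℝ) - 1)) := by rw [← Real.exp_add, sub_add_cancel]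
      have hPpos : (0 : ℝ) < P N := lt_of_lt_of_le one_pos (hP1 N)
      calc P (N + 1) * Real.exp (1 / (N : ℝ))
          ≤ ((1 + 1 / (N : ℝ) ^ 2) * P N) * Real.exp (1 / (N : ℝ)) := by
            apply mul_le_mul_of_nonneg_right (hPstep N hN) (Real.exp_pos _).le
        _ = P N * ((1 + 1 / (N : ℝ) ^ 2) * Real.exp (1 / (N : ℝ))) := by ring
        _ ≤ P N * Real.exp (1 / ((N : ℝ) - 1)) := by
            apply mul_le_mul_of_nonneg_left hexp hPpos.le
        _ ≤ C := ih
  have hPle : ∀ N : ℕ, K ≤ N → P N ≤ C := by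
    intro N hN
    have h2 : (2 : ℕ) ≤ N := by omega
    have h2r : (2 : ℝ) ≤ (N : ℝ) := by exact_mod_cast h2
    have hexp1 : (1 : ℝ) ≤ Real.exp (1 / ((N : ℝ) - 1)) :=
      Real.one_le_exp (one_div_nonneg.mpr (by linarith))
    have hPpos : (0 : ℝ) < P N := lt_of_lt_of_le one_pos (hP1 N)
    calc P N ≤ P N * Real.exp (1 / ((N : ℝ) - 1)) :=
          le_mul_of_one_le_right hPpos.le hexp1
      _ ≤ C := hQ N hN
  -- global bound
  set B := C ⊔ (Finset.Icc 0 K).sup' (Finset.nonempty_Icc.mpr (Nat.zero_le K)) a with hB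
  have hab : ∀ n, a n ≤ B := by
    intro n
    rcases le_or_gt n K with hn | hn
    · exact le_trans (Finset.le_sup' a (Finset.mem_Icc.mpr ⟨Nat.zero_le n, hn⟩)) le_sup_right
    · have h1 : 1 ≤ n := by omega
      have han : a n ≤ M n := by
        rw [hMpos n h1]
        exact Finset.le_sup' a (Finset.mem_Icc.mpr ⟨h1, le_refl n⟩)
      calc a n ≤ M n := han
        _ ≤ P n := le_sup_left
        _ ≤ C := hPle n (by omega)
        _ ≤ B := le_sup_left
  have hlim : Filter.limsup (fun n => (a n : EReal)) Filter.atTop ≤ (B : EReal) :=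
    Filter.limsup_le_of_le (by isBoundedDefault)
      (Filter.Eventually.of_forall fun n => EReal.coe_le_coe_iff.mpr (hab n))
  rw [h] at hlim
  exact absurd hlim (EReal.coe_lt_top B).not_ge
end

section
/- Let ε > 0 and let (a_n) be an increasing sequence of real numbers with a_n ≥ n^{1+ε} for all sufficiently large n. Then for all sufficiently large N, ∑_{n=N}^∞ a_n^{−1 + 1/(log log a_n)^{3+ε}} < a_N^{−ε/(2(1+ε))}. -/
open Filter Real Topology

/-- tail estimate for `∑ a_n^{−1 + 1/(log log a_n)^{3+ε}}`. -/
theorem stmt8 (ε : ℝ) (hε : 0 < ε) (a : ℕ → ℝ) (hmono : Monotone a)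
    (hev : ∀ᶠ n : ℕ in Filter.atTop, (n : ℝ) ^ (1 + ε) ≤ a n) :
    ∀ᶠ N : ℕ in Filter.atTop,
      (∑' n : ℕ, a (N + n) ^ (-1 + 1 / Real.log (Real.log (a (N + n))) ^ (3 + ε)))
        < a N ^ (-(ε / (2 * (1 + ε)))) := by
  have h1ε : (0:ℝ) < 1 + ε := by linarith
  set θ : ℝ := ε / (2 * (1 + ε)) with hθdef
  set δ : ℝ := ε / (4 * (1 + ε)) with hδdef
  have hθ : 0 < θ := by positivity
  have hδ : 0 < δ := by positivity
  set p : ℝ := 1 + ε / 4 with hpdef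
  -- a tends to infinity
  have ha : Tendsto a atTop atTop := by
    apply tendsto_atTop_mono' _ hev
    exact (tendsto_rpow_atTop h1ε).comp tendsto_natCast_atTop_atTop
  have hll : Tendsto (fun n => Real.log (Real.log (a n))) atTop atTop :=
    Real.tendsto_log_atTop.comp (Real.tendsto_log_atTop.comp ha)
  have hbig : ∀ᶠ n : ℕ in atTop, max 1 δ⁻¹ ≤ Real.log (Real.log (a n)) :=
    hll.eventually_ge_atTop _
  have hone : ∀ᶠ n : ℕ in atTop, (1:ℝ) ≤ (n:ℝ) := by
    filter_upwards [eventually_ge_atTop 1] with n hn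
    exact_mod_cast hn
  obtain ⟨n₀, hn₀⟩ := eventually_atTop.1 (hev.and (hbig.and hone))
  -- key pointwise bound
  have key : ∀ N, n₀ ≤ N → ∀ n, N ≤ n →
      a n ^ (-1 + 1 / Real.log (Real.log (a n)) ^ (3 + ε)) ≤ a N ^ (-θ) * (n:ℝ) ^ (-p) := by
    intro N hN n hn
    obtain ⟨hrn, hLn, h1n⟩ := hn₀ n (le_trans hN hn)
    obtain ⟨hrN, hLN, h1N⟩ := hn₀ N hN
    have h1an : (1:ℝ) ≤ a n := le_trans (Real.one_le_rpow h1n (le_of_lt h1ε)) hrn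
    have h1aN : (1:ℝ) ≤ a N := le_trans (Real.one_le_rpow h1N (le_of_lt h1ε)) hrN
    have hL1 : (1:ℝ) ≤ Real.log (Real.log (a n)) := le_trans (le_max_left _ _) hLn
    have hLδ : δ⁻¹ ≤ Real.log (Real.log (a n)) := le_trans (le_max_right _ _) hLn
    have hpow : δ⁻¹ ≤ Real.log (Real.log (a n)) ^ (3 + ε) := by
      calc δ⁻¹ ≤ Real.log (Real.log (a n)) := hLδ
        _ = Real.log (Real.log (a n)) ^ (1:ℝ) := (Real.rpow_one _).symm
        _ ≤ Real.log (Real.log (a n)) ^ (3 + ε) :=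
            Real.rpow_le_rpow_of_exponent_le hL1 (by linarith)
    have hfrac : 1 / Real.log (Real.log (a n)) ^ (3 + ε) ≤ δ := by
      rw [div_le_iff₀ (lt_of_lt_of_le (by positivity) hpow)]
      calc (1:ℝ) = δ * δ⁻¹ := (mul_inv_cancel₀ (ne_of_gt hδ)).symm
        _ ≤ δ * Real.log (Real.log (a n)) ^ (3 + ε) := by
            exact mul_le_mul_of_nonneg_left hpow (le_of_lt hδ)
    have hexp : -1 + 1 / Real.log (Real.log (a n)) ^ (3 + ε) ≤ -θ + (-1 + δ + θ) := by
      linarith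
    calc a n ^ (-1 + 1 / Real.log (Real.log (a n)) ^ (3 + ε))
        ≤ a n ^ (-θ + (-1 + δ + θ)) := Real.rpow_le_rpow_of_exponent_le h1an hexp
      _ = a n ^ (-θ) * a n ^ (-1 + δ + θ) := Real.rpow_add (by linarith) _ _
      _ ≤ a N ^ (-θ) * (n:ℝ) ^ (-p) := by
          apply mul_le_mul _ _ (Real.rpow_nonneg (by linarith) _) (Real.rpow_nonneg (by linarith) _)
          · exact Real.rpow_le_rpow_of_nonpos (by linarith) (hmono hn) (by linarith)
          · have hδθ : -1 + δ + θ ≤ 0 := by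
              have : δ + θ < 1 := by
                rw [hδdef, hθdef]
                rw [div_add_div _ _ (by positivity) (by positivity), div_lt_one (by positivity)]
                ring_nf
                nlinarith
              linarith
            calc a n ^ (-1 + δ + θ) ≤ ((n:ℝ) ^ (1+ε)) ^ (-1 + δ + θ) :=
                  Real.rpow_le_rpow_of_nonpos (by positivity) hrn hδθ
              _ = (n:ℝ) ^ ((1+ε) * (-1 + δ + θ)) := (Real.rpow_mul (by positivity) _ _).symm
              _ = (n:ℝ) ^ (-p) := by
                  congr 1
                  rw [hδdef, hθdef, hpdef]
                  field_simp
                  ring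
  -- summability of the dominating series
  have hp1 : -p < -1 := by rw [hpdef]; linarith
  have hs : Summable (fun k : ℕ => (k:ℝ) ^ (-p)) := Real.summable_nat_rpow.2 hp1
  -- tail sums tend to zero
  have hT : Tendsto (fun N : ℕ => ∑' n : ℕ, ((N + n : ℕ) : ℝ) ^ (-p)) atTop (𝓝 0) := by
    have := tendsto_sum_nat_add (fun k : ℕ => (k:ℝ) ^ (-p))
    convert this using 2 with N
    exact tsum_congr fun n => by rw [add_comm]
  have hT1 : ∀ᶠ N : ℕ in atTop, (∑' n : ℕ, ((N + n : ℕ) : ℝ) ^ (-p)) < 1 :=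
    hT.eventually_lt_const one_pos
  filter_upwards [eventually_ge_atTop n₀, hT1] with N hN hTN
  obtain ⟨hrN, hLN, h1N⟩ := hn₀ N hN
  have h1aN : (1:ℝ) ≤ a N := le_trans (Real.one_le_rpow h1N (le_of_lt h1ε)) hrN
  have haNpos : (0:ℝ) < a N ^ (-θ) := Real.rpow_pos_of_pos (by linarith) _
  have hs' : Summable (fun n : ℕ => ((N + n : ℕ) : ℝ) ^ (-p)) :=
    hs.comp_injective (add_right_injective N)
  have hs'' : Summable (fun n : ℕ => a N ^ (-θ) * ((N + n : ℕ) : ℝ) ^ (-p)) := hs'.mul_left _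
  have hkey : ∀ n : ℕ, a (N + n) ^ (-1 + 1 / Real.log (Real.log (a (N + n))) ^ (3 + ε))
      ≤ a N ^ (-θ) * ((N + n : ℕ) : ℝ) ^ (-p) := by
    intro n
    have := key N hN (N + n) (Nat.le_add_right N n)
    simpa using this
  have hsg : Summable (fun n : ℕ =>
      a (N + n) ^ (-1 + 1 / Real.log (Real.log (a (N + n))) ^ (3 + ε))) := by
    apply Summable.of_nonneg_of_le _ hkey hs''
    intro n
    have h1an : (1:ℝ) ≤ a (N + n) := le_trans h1aN (hmono (Nat.le_add_right N n))
    exact Real.rpow_nonneg (by linarith) _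
  calc (∑' n : ℕ, a (N + n) ^ (-1 + 1 / Real.log (Real.log (a (N + n))) ^ (3 + ε)))
      ≤ ∑' n : ℕ, a N ^ (-θ) * ((N + n : ℕ) : ℝ) ^ (-p) := Summable.tsum_le_tsum hkey hsg hs''
    _ = a N ^ (-θ) * ∑' n : ℕ, ((N + n : ℕ) : ℝ) ^ (-p) := tsum_mul_left
    _ < a N ^ (-θ) * 1 := by
        exact mul_lt_mul_of_pos_left hTN haNpos
    _ = a N ^ (-(ε / (2 * (1 + ε)))) := by rw [mul_one]
end

section
/- Let ε > 0 and let (a_n) be an increasing sequence of real numbers with a_n ≥ n^{1+ε} for all sufficiently large n and a_n > 2^n for all n. Then for all sufficiently large N, ∑_{n=N}^∞ a_n^{−1 + 1/(log log a_n)^{3+ε}} < a_N^{−1 + 1/(log log a_N)^{3+ε/2}}. -/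
/-!
Put `t = log a_N`, `L = log t` and `e = -1 + 1 / L^(3+ε)`. As `a_n` grows its exponent decreases,
so every term with `n ≥ N` is at most `a_n^e`. The first `K = ⌈log₂ a_N⌉` of them are at most
`a_N^e` each, and beyond them `a_(N+K+j) > 2^(K+j) ≥ a_N 2^j`, so the rest is dominated by a
geometric series of ratio `2^e ≤ 3/4`. The tail is therefore at most `a_N^e (t / log 2 + 5)`,
while the right-hand side is `a_N^e exp (t (L^-(3+ε/2) - L^-(3+ε)))`; the exponent there is at
least `t / (2 L^(3+ε/2)) ≥ 2 log t`, so this factor exceeds `t²`.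
-/

open Filter Real

theorem tsum_le_of_le_of_le_geometric {f : ℕ → ℝ} {A r : ℝ} {K : ℕ} (hf : ∀ n, 0 ≤ f n)
    (hhead : ∀ i < K, f i ≤ A) (htail : ∀ j, f (j + K) ≤ A * r ^ j) (hr0 : 0 ≤ r) (hr1 : r < 1) :
    ∑' n, f n ≤ A * (K + (1 - r)⁻¹) := by
  have hgeo : Summable fun j => A * r ^ j := (summable_geometric_of_lt_one hr0 hr1).mul_left A
  have htail_summable : Summable fun j => f (j + K) :=
    hgeo.of_nonneg_of_le (fun j => hf _) htail
  have hhead_sum : ∑ i ∈ Finset.range K, f i ≤ K * A := by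
    simpa using Finset.sum_le_sum fun i hi => hhead i (Finset.mem_range.mp hi)
  have htail_sum : ∑' j, f (j + K) ≤ A * (1 - r)⁻¹ := by
    rw [← tsum_geometric_of_lt_one hr0 hr1, ← tsum_mul_left]
    exact htail_summable.tsum_le_tsum htail hgeo
  rw [← ((summable_nat_add_iff K).mp htail_summable).sum_add_tsum_nat_add K]
  linarith

theorem one_div_two_mul_rpow_le_sub {L p q : ℝ} (hL : 0 < L) (hpq : 2 ≤ L ^ (q - p)) :
    1 / (2 * L ^ p) ≤ 1 / L ^ p - 1 / L ^ q := by
  have hLp : 0 < L ^ p := rpow_pos_of_pos hL p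
  have hLq : L ^ q = L ^ p * L ^ (q - p) := by rw [← rpow_add hL, add_sub_cancel]
  rw [hLq, div_sub_div _ _ hLp.ne' (by positivity), div_le_div_iff₀ (by positivity) (by positivity)]
  nlinarith [mul_pos hLp hLp]

theorem eventually_two_mul_log_le_mul_sub {p q : ℝ} (hpq : p < q) :
    ∀ᶠ t in atTop, 2 * log t ≤ t * (1 / log t ^ p - 1 / log t ^ q) := by
  have hlog_pos : ∀ᶠ t in atTop, 0 < log t := tendsto_log_atTop.eventually_gt_atTop 0
  have hgap : ∀ᶠ t in atTop, 2 ≤ log t ^ (q - p) :=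
    ((tendsto_rpow_atTop (sub_pos.mpr hpq)).comp tendsto_log_atTop).eventually_ge_atTop 2
  have hsmall : ∀ᶠ t in atTop, ‖log t ^ (p + 1)‖ ≤ 1 / 4 * ‖t ^ (1 : ℝ)‖ :=
    (isLittleO_log_rpow_rpow_atTop (p + 1) one_pos).bound (by norm_num)
  filter_upwards [hlog_pos, hgap, hsmall, eventually_ge_atTop 0] with t hL hgap hsmall ht
  have hLp : 0 < log t ^ p := rpow_pos_of_pos hL p
  have hLp1 : log t ^ (p + 1) = log t * log t ^ p := by rw [rpow_add hL, rpow_one, mul_comm]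
  rw [rpow_one, norm_of_nonneg (rpow_nonneg hL.le _), norm_of_nonneg ht, hLp1] at hsmall
  calc 2 * log t ≤ t * (1 / (2 * log t ^ p)) := by
        rw [mul_one_div, le_div_iff₀ (by positivity)]; linarith
    _ ≤ t * (1 / log t ^ p - 1 / log t ^ q) :=
        mul_le_mul_of_nonneg_left (one_div_two_mul_rpow_le_sub hL hgap) ht

theorem eventually_div_log_two_add_five_lt_exp {p q : ℝ} (hpq : p < q) :
    ∀ᶠ t in atTop, t / log 2 + 5 < exp (t * (1 / log t ^ p - 1 / log t ^ q)) := by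
  filter_upwards [eventually_two_mul_log_le_mul_sub hpq, eventually_ge_atTop 4] with t h ht
  have hsq : exp (2 * log t) = t * t := by rw [two_mul, exp_add, exp_log (by linarith)]
  have hdiv : t / log 2 < 2 * t := by
    rw [div_lt_iff₀ (log_pos one_lt_two)]; nlinarith [log_two_gt_d9]
  nlinarith [exp_le_exp.mpr h]

theorem two_rpow_le_three_quarters {e : ℝ} (he : e ≤ -(1 / 2)) : (2 : ℝ) ^ e ≤ 3 / 4 := by
  have hsq : (2 : ℝ) ^ e * 2 ^ e ≤ 1 / 2 := by
    rw [← rpow_add two_pos, one_div, ← rpow_neg_one]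
    exact rpow_le_rpow_of_exponent_le one_le_two (by linarith)
  nlinarith [rpow_pos_of_pos two_pos e]

theorem le_two_pow_natCeil_logb {x : ℝ} (hx : 0 < x) : x ≤ 2 ^ ⌈logb 2 x⌉₊ := by
  calc x = 2 ^ logb 2 x := (rpow_logb two_pos (by norm_num) hx).symm
    _ ≤ 2 ^ (⌈logb 2 x⌉₊ : ℝ) := rpow_le_rpow_of_exponent_le one_le_two (Nat.le_ceil _)
    _ = 2 ^ ⌈logb 2 x⌉₊ := rpow_natCast 2 _

noncomputable def tailExponent (s x : ℝ) : ℝ := -1 + 1 / log (log x) ^ s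

theorem tailExponent_anti {s x y : ℝ} (hs : 0 ≤ s) (hx0 : 0 < x) (hx : 1 < log x)
    (hxy : x ≤ y) : tailExponent s y ≤ tailExponent s x := by
  have hLx : 0 < log (log x) := log_pos hx
  have hL : log (log x) ≤ log (log y) := log_le_log (by linarith) (log_le_log hx0 hxy)
  have := one_div_le_one_div_of_le (rpow_pos_of_pos hLx s) (rpow_le_rpow hLx.le hL hs)
  unfold tailExponent; linarith

theorem tailExponent_le_neg_half {s x : ℝ} (hs : 1 ≤ s) (hx : 2 ≤ log (log x)) :
    tailExponent s x ≤ -(1 / 2) := by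
  have hLs : log (log x) ≤ log (log x) ^ s := by
    simpa using rpow_le_rpow_of_exponent_le (by linarith) hs (x := log (log x))
  have : 1 / log (log x) ^ s ≤ 1 / 2 := one_div_le_one_div_of_le two_pos (by linarith)
  unfold tailExponent; linarith

theorem rpow_tailExponent_le {s x y z : ℝ} (hs : 1 ≤ s) (hx1 : 1 ≤ x) (hx : 2 ≤ log (log x))
    (hxy : x ≤ y) (hz : 0 < z) (hzy : z ≤ y) : y ^ tailExponent s y ≤ z ^ tailExponent s x := by
  have hlogx : 1 < log x := (log_pos_iff (log_nonneg hx1)).mp (by linarith)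
  calc y ^ tailExponent s y ≤ y ^ tailExponent s x :=
        rpow_le_rpow_of_exponent_le (hx1.trans hxy)
          (tailExponent_anti (by linarith) (by linarith) hlogx hxy)
    _ ≤ z ^ tailExponent s x :=
        rpow_le_rpow_of_nonpos hz hzy ((tailExponent_le_neg_half hs hx).trans (by norm_num))

theorem tsum_rpow_tailExponent_le {a : ℕ → ℝ} (hmono : Monotone a) (hgt : ∀ n, (2 : ℝ) ^ n ≤ a n)
    {s : ℝ} (hs : 1 ≤ s) {N : ℕ} (hN : 2 ≤ log (log (a N))) :
    ∑' n, a (N + n) ^ tailExponent s (a (N + n)) ≤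
      a N ^ tailExponent s (a N) * (logb 2 (a N) + 5) := by
  set e := tailExponent s (a N)
  set K := ⌈logb 2 (a N)⌉₊
  have ha1 : ∀ n, 1 ≤ a n := fun n => (one_le_pow₀ one_le_two).trans (hgt n)
  have haN : 0 < a N := by linarith [ha1 N]
  have hr : (2 : ℝ) ^ e ≤ 3 / 4 := two_rpow_le_three_quarters (tailExponent_le_neg_half hs hN)
  have hterm : ∀ n z, 0 < z → z ≤ a (N + n) → a (N + n) ^ tailExponent s (a (N + n)) ≤ z ^ e :=
    fun n z hz hzn => rpow_tailExponent_le hs (ha1 N) hN (hmono (Nat.le_add_right N n)) hz hzn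
  have hdouble : ∀ j : ℕ, a N * 2 ^ j ≤ a (N + (j + K)) := fun j =>
    calc a N * 2 ^ j ≤ 2 ^ K * 2 ^ j := by gcongr; exact le_two_pow_natCeil_logb haN
      _ = 2 ^ (K + j) := (pow_add 2 K j).symm
      _ ≤ 2 ^ (N + (j + K)) := pow_le_pow_right₀ one_le_two (by omega)
      _ ≤ a (N + (j + K)) := hgt _
  have hsum : ∑' n, a (N + n) ^ tailExponent s (a (N + n)) ≤ a N ^ e * (K + (1 - 2 ^ e)⁻¹) := by
    refine tsum_le_of_le_of_le_geometric (fun n => rpow_nonneg (by linarith [ha1 (N + n)]) _)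
      (fun i _ => hterm i (a N) haN (hmono (Nat.le_add_right N i))) (fun j => ?_)
      (rpow_nonneg zero_le_two e) (by linarith)
    calc _ ≤ (a N * 2 ^ j) ^ e := hterm _ _ (by positivity) (hdouble j)
      _ = a N ^ e * (2 ^ e) ^ j := by
        rw [mul_rpow haN.le (by positivity), ← rpow_natCast_mul zero_le_two, mul_comm (j : ℝ) e,
          rpow_mul_natCast zero_le_two]
  have hK : (K : ℝ) < logb 2 (a N) + 1 := Nat.ceil_lt_add_one (logb_nonneg one_lt_two (ha1 N))
  have hgeom : (1 - (2 : ℝ) ^ e)⁻¹ ≤ 4 := by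
    rw [inv_le_comm₀ (by linarith) (by norm_num)]; linarith
  calc _ ≤ a N ^ e * (K + (1 - 2 ^ e)⁻¹) := hsum
    _ ≤ a N ^ e * (logb 2 (a N) + 5) :=
      mul_le_mul_of_nonneg_left (by linarith) (rpow_nonneg haN.le e)

theorem stmt9_general (ε : ℝ) (hε : 0 < ε) (a : ℕ → ℝ) (hmono : Monotone a)
    (hgt : ∀ n : ℕ, (2 : ℝ) ^ n < a n) :
    ∀ᶠ N : ℕ in Filter.atTop,
      (∑' n : ℕ, a (N + n) ^ (-1 + 1 / Real.log (Real.log (a (N + n))) ^ (3 + ε)))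
        < a N ^ (-1 + 1 / Real.log (Real.log (a N)) ^ (3 + ε / 2)) := by
  have hnat_le : ∀ n : ℕ, (n : ℝ) ≤ a n := fun n =>
    (show (n : ℝ) ≤ 2 ^ n by exact_mod_cast n.lt_two_pow_self.le).trans (hgt n).le
  have hlog : Tendsto (fun N => log (a N)) atTop atTop :=
    tendsto_log_atTop.comp (tendsto_atTop_mono hnat_le tendsto_natCast_atTop_atTop)
  filter_upwards [hlog.eventually (tendsto_log_atTop.eventually_ge_atTop 2),
    hlog.eventually (eventually_div_log_two_add_five_lt_exp (show 3 + ε / 2 < 3 + ε by linarith))]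
    with N hN hexp
  have haN : 0 < a N := (pow_pos two_pos N).trans (hgt N)
  have hpos : 0 < a N ^ tailExponent (3 + ε) (a N) := rpow_pos_of_pos haN _
  rw [log_div_log] at hexp
  calc _ ≤ a N ^ tailExponent (3 + ε) (a N) * (logb 2 (a N) + 5) :=
        tsum_rpow_tailExponent_le hmono (fun n => (hgt n).le) (by linarith) hN
    _ < a N ^ tailExponent (3 + ε) (a N) * exp (log (a N) *
          (1 / log (log (a N)) ^ (3 + ε / 2) - 1 / log (log (a N)) ^ (3 + ε))) :=
        mul_lt_mul_of_pos_left hexp hpos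
    _ = _ := by
        rw [← rpow_def_of_pos haN, ← rpow_add haN, tailExponent]
        ring_nf

/-- sharper tail estimate under `a n > 2 ^ n`. -/
theorem stmt9 (ε : ℝ) (hε : 0 < ε) (a : ℕ → ℝ) (hmono : Monotone a)
    (hev : ∀ᶠ n : ℕ in Filter.atTop, (n : ℝ) ^ (1 + ε) ≤ a n)
    (hgt : ∀ n : ℕ, (2 : ℝ) ^ n < a n) :
    ∀ᶠ N : ℕ in Filter.atTop,
      (∑' n : ℕ, a (N + n) ^ (-1 + 1 / Real.log (Real.log (a (N + n))) ^ (3 + ε)))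
        < a N ^ (-1 + 1 / Real.log (Real.log (a N)) ^ (3 + ε / 2)) :=
  stmt9_general ε hε a hmono hgt
end

section
/- Let δ ∈ [0,1), D ∈ ℕ, (D_n) a sequence of natural numbers, and (a_n) a non-decreasing sequence of positive reals with limsup_{n→∞} a_n^{1/(D^n (n+δ)! ∏_{i=1}^{n−1} D_i)} = ∞ (interpreting (n+δ)! via the Gamma function). Then for infinitely many N: (i) a_{N+1}^{1/(D^{N+1}(N+1+δ)! ∏_{i=1}^{N} D_i)} > (1 + 1/N²) · max_{1≤n≤N} a_n^{1/(D^n (n+δ)! ∏_{i=1}^{n−1} D_i)}, and (ii) a_{N+1} > ((1 + 1/N²)^{D^N (N+1+δ)! ∏_{i=1}^{N−1} D_i} · ∏_{n=1}^N a_n^{n+δ})^{D·D_N}. -/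
/-!
Let `b n = a n ^ (E n)⁻¹` be the normalized roots, `E n = D ^ n * (n + δ)! * ∏_{i < n} D_i`.
If the running maximum `M N = max_{n ≤ N} b n` satisfied `M (N + 1) ≤ (1 + 1 / N ^ 2) * M N` for all
large `N`, it would stay below a constant times `∏ (1 + 1 / N ^ 2) ≤ exp (∑ 1 / N ^ 2)`, contradicting
`limsup b = ∞`; this gives infinitely many jumps (i).

For (ii), take a jump `N` with `M N ≥ 1`. Then `a n ≤ (M N) ^ (E n)` for `n ≤ N`, and since
`(n + δ) * (n + δ)! = (n + 1 + δ)! - (n + δ)!` telescopes, `∑_{n ≤ N} (n + δ) * E n ≤ F`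
with `F = D ^ N * (N + 1 + δ)! * ∏_{i < N} D_i`. As `E (N + 1) = F * D * D_N`, raising the jump
`b (N + 1) > (1 + 1 / N ^ 2) * M N` to the power `E (N + 1)` yields (ii).
-/

open Filter Finset Real

theorem le_abs_mul_exp_tsum_of_le_one_add_mul {M ε : ℕ → ℝ} {K N : ℕ} (hε : ∀ k, 0 ≤ ε k)
    (hs : Summable ε) (h : ∀ n ≥ K, M (n + 1) ≤ (1 + ε n) * M n) (hN : K ≤ N) :
    M N ≤ |M K| * exp (∑' k, ε k) := by
  have hprod : M N ≤ |M K| * ∏ k ∈ Ico K N, (1 + ε k) := by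
    induction N, hN using Nat.le_induction with
    | base => simp [le_abs_self]
    | succ n hKn ih =>
      have : 0 ≤ 1 + ε n := by linarith [hε n]
      calc M (n + 1) ≤ (1 + ε n) * M n := h n hKn
        _ ≤ (1 + ε n) * (|M K| * ∏ k ∈ Ico K n, (1 + ε k)) := by gcongr
        _ = |M K| * ∏ k ∈ Ico K (n + 1), (1 + ε k) := by rw [prod_Ico_succ_top hKn]; ring
  calc M N ≤ |M K| * ∏ k ∈ Ico K N, (1 + ε k) := hprod
    _ ≤ |M K| * exp (∑ k ∈ Ico K N, ε k) := by gcongr; exact prod_one_add_le_exp_sum _ hε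
    _ ≤ |M K| * exp (∑' k, ε k) := by gcongr; exact hs.sum_le_tsum _ fun k _ => hε k

theorem infinite_setOf_one_add_inv_sq_mul_sup'_lt {b : ℕ → ℝ} (hb0 : ∀ n, 0 ≤ b n)
    (hb : ∀ C, ∃ᶠ n in atTop, C < b n) :
    {N : ℕ | ∃ h1 : 1 ≤ N,
      (1 + 1 / (N : ℝ) ^ 2) * (Icc 1 N).sup' (nonempty_Icc.mpr h1) b < b (N + 1)}.Infinite := by
  intro hfin
  obtain ⟨K, hK⟩ := hfin.bddAbove
  have hstep : ∀ N ≥ K + 1,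
      partialSups b (N + 1) ≤ (1 + 1 / (N : ℝ) ^ 2) * partialSups b N := by
    intro N hN
    have h1 : 1 ≤ N := by omega
    have hjump : b (N + 1) ≤ (1 + 1 / (N : ℝ) ^ 2) * (Icc 1 N).sup' (nonempty_Icc.mpr h1) b :=
      not_lt.mp fun h => absurd (hK ⟨h1, h⟩) (by omega)
    have hsup : (Icc 1 N).sup' (nonempty_Icc.mpr h1) b ≤ partialSups b N :=
      sup'_le _ _ fun n hn => le_partialSups_of_le b (mem_Icc.mp hn).2
    have hM0 : 0 ≤ partialSups b N := (hb0 0).trans (le_partialSups_of_le b N.zero_le)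
    have hfactor : (1 : ℝ) ≤ 1 + 1 / (N : ℝ) ^ 2 := le_add_of_nonneg_right (by positivity)
    rw [← Order.succ_eq_add_one, partialSups_succ]
    exact sup_le (le_mul_of_one_le_left hM0 hfactor) (hjump.trans (by gcongr))
  have hsum : Summable fun k : ℕ => 1 / (k : ℝ) ^ 2 := summable_one_div_nat_pow.mpr one_lt_two
  set C := |partialSups b (K + 1)| * exp (∑' k : ℕ, 1 / (k : ℝ) ^ 2)
  obtain ⟨n, hCn, hKn⟩ := ((hb C).and_eventually (eventually_ge_atTop (K + 1))).exists
  exact hCn.not_ge ((le_partialSups b n).trans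
    (le_abs_mul_exp_tsum_of_le_one_add_mul (fun k => by positivity) hsum hstep hKn))

theorem frequently_lt_of_limsup_coe_eq_top {ι : Type*} {l : Filter ι} {u : ι → ℝ}
    (h : limsup (fun i => (u i : EReal)) l = ⊤) (C : ℝ) : ∃ᶠ i in l, C < u i :=
  (frequently_lt_of_lt_limsup (by isBoundedDefault) (h ▸ EReal.coe_lt_top C)).mono
    fun _ => EReal.coe_lt_coe_iff.mp

theorem Real.sum_Icc_add_mul_Gamma_add_one {x : ℝ} (hx : 0 ≤ x) (N : ℕ) :
    ∑ n ∈ Icc 1 N, ((n : ℝ) + x) * Gamma (n + x + 1) = Gamma (N + x + 2) - Gamma (x + 2) := by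
  induction N with
  | zero => simp
  | succ N ih =>
    have hrec : Gamma ((N : ℝ) + x + 2 + 1) = (N + x + 2) * Gamma (N + x + 2) :=
      Gamma_add_one (by positivity)
    rw [sum_Icc_succ_top (by omega), ih]
    push_cast
    rw [show (N : ℝ) + 1 + x + 2 = N + x + 2 + 1 by ring, hrec,
      show (N : ℝ) + 1 + x + 1 = N + x + 2 by ring]
    ring

theorem Finset.prod_rpow_le_rpow_of_le_rpow {ι : Type*} {s : Finset ι} {x w e : ι → ℝ} {M F : ℝ}
    (hx : ∀ i ∈ s, 0 ≤ x i) (hw : ∀ i ∈ s, 0 ≤ w i) (hM : 1 ≤ M) (hxM : ∀ i ∈ s, x i ≤ M ^ e i)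
    (hF : ∑ i ∈ s, e i * w i ≤ F) : ∏ i ∈ s, x i ^ w i ≤ M ^ F :=
  calc ∏ i ∈ s, x i ^ w i ≤ ∏ i ∈ s, (M ^ e i) ^ w i :=
        prod_le_prod (fun i hi => rpow_nonneg (hx i hi) _)
          fun i hi => rpow_le_rpow (hx i hi) (hxM i hi) (hw i hi)
    _ = M ^ ∑ i ∈ s, e i * w i := by
        rw [rpow_sum_of_pos (by linarith)]
        exact prod_congr rfl fun i _ => (rpow_mul (by linarith) _ _).symm
    _ ≤ M ^ F := rpow_le_rpow_of_exponent_le hM hF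

noncomputable def normalizingExponent (δ : ℝ) (D : ℕ) (Dn : ℕ → ℕ) (n : ℕ) : ℝ :=
  (D : ℝ) ^ n * Gamma ((n : ℝ) + δ + 1) * ∏ i ∈ Ico 1 n, (Dn i : ℝ)

section normalizingExponent

variable {δ : ℝ} {D : ℕ} {Dn : ℕ → ℕ}

theorem normalizingExponent_pos (hδ0 : 0 ≤ δ) (hD : 1 ≤ D) (hDn : ∀ n, 1 ≤ Dn n) (n : ℕ) :
    0 < normalizingExponent δ D Dn n := by
  have hGamma : 0 < Gamma ((n : ℝ) + δ + 1) := Gamma_pos_of_pos (by positivity)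
  have hprod : (0 : ℝ) < ∏ i ∈ Ico 1 n, (Dn i : ℝ) := prod_pos fun i _ => by exact_mod_cast hDn i
  unfold normalizingExponent
  positivity

theorem normalizingExponent_succ {N : ℕ} (hN : 1 ≤ N) :
    normalizingExponent δ D Dn (N + 1) = (D : ℝ) ^ N * Gamma ((N : ℝ) + 1 + δ + 1) *
      (∏ i ∈ Ico 1 N, (Dn i : ℝ)) * ((D * Dn N : ℕ) : ℝ) := by
  rw [normalizingExponent, prod_Ico_succ_top hN]
  push_cast
  ring

theorem pow_mul_prod_Ico_le (hD : 1 ≤ D) (hDn : ∀ n, 1 ≤ Dn n) {n N : ℕ} (hnN : n ≤ N) :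
    (D : ℝ) ^ n * ∏ i ∈ Ico 1 n, (Dn i : ℝ) ≤ (D : ℝ) ^ N * ∏ i ∈ Ico 1 N, (Dn i : ℝ) := by
  exact_mod_cast Nat.mul_le_mul (Nat.pow_le_pow_right hD hnN)
    (prod_le_prod_of_subset_of_one_le' (Ico_subset_Ico le_rfl hnN) fun i _ _ => hDn i)

theorem sum_normalizingExponent_mul_le (hδ0 : 0 ≤ δ) (hD : 1 ≤ D) (hDn : ∀ n, 1 ≤ Dn n)
    (N : ℕ) : ∑ n ∈ Icc 1 N, normalizingExponent δ D Dn n * ((n : ℝ) + δ) ≤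
      (D : ℝ) ^ N * Gamma ((N : ℝ) + 1 + δ + 1) * ∏ i ∈ Ico 1 N, (Dn i : ℝ) := by
  set P := (D : ℝ) ^ N * ∏ i ∈ Ico 1 N, (Dn i : ℝ)
  have hP : 0 ≤ P := by positivity
  calc ∑ n ∈ Icc 1 N, normalizingExponent δ D Dn n * ((n : ℝ) + δ)
      ≤ ∑ n ∈ Icc 1 N, P * (((n : ℝ) + δ) * Gamma (n + δ + 1)) := by
        refine sum_le_sum fun n hn => ?_
        have hGamma : 0 < Gamma ((n : ℝ) + δ + 1) := Gamma_pos_of_pos (by positivity)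
        have := pow_mul_prod_Ico_le hD hDn (mem_Icc.mp hn).2
        calc normalizingExponent δ D Dn n * ((n : ℝ) + δ)
            = ((D : ℝ) ^ n * ∏ i ∈ Ico 1 n, (Dn i : ℝ)) * (((n : ℝ) + δ) * Gamma (n + δ + 1)) := by
              rw [normalizingExponent]; ring
          _ ≤ P * (((n : ℝ) + δ) * Gamma (n + δ + 1)) := by gcongr
    _ = P * (Gamma (N + δ + 2) - Gamma (δ + 2)) := by
        rw [← mul_sum, sum_Icc_add_mul_Gamma_add_one hδ0]
    _ ≤ P * Gamma (N + δ + 2) := by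
        gcongr
        exact sub_le_self _ (Gamma_pos_of_pos (by positivity)).le
    _ = (D : ℝ) ^ N * Gamma ((N : ℝ) + 1 + δ + 1) * ∏ i ∈ Ico 1 N, (Dn i : ℝ) := by
        rw [show (N : ℝ) + 1 + δ + 1 = N + δ + 2 by ring]; ring

end normalizingExponent

theorem rpow_mul_prod_rpow_lt_of_mul_lt {δ : ℝ} (hδ0 : 0 ≤ δ) {D : ℕ} (hD : 1 ≤ D)
    {Dn : ℕ → ℕ} (hDn : ∀ n, 1 ≤ Dn n) {a : ℕ → ℝ} (hpos : ∀ n, 0 < a n) {N : ℕ} (hN : 1 ≤ N)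
    {s M : ℝ} (hs : 0 ≤ s) (hM : 1 ≤ M)
    (hle : ∀ n ∈ Icc 1 N, a n ^ (normalizingExponent δ D Dn n)⁻¹ ≤ M)
    (hlt : s * M < a (N + 1) ^ (normalizingExponent δ D Dn (N + 1))⁻¹) :
    (s ^ ((D : ℝ) ^ N * Gamma ((N : ℝ) + 1 + δ + 1) * ∏ i ∈ Ico 1 N, (Dn i : ℝ)) *
        ∏ n ∈ Icc 1 N, a n ^ ((n : ℝ) + δ)) ^ ((D * Dn N : ℕ) : ℝ) < a (N + 1) := by
  set F := (D : ℝ) ^ N * Gamma ((N : ℝ) + 1 + δ + 1) * ∏ i ∈ Ico 1 N, (Dn i : ℝ)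
  set q : ℝ := ((D * Dn N : ℕ) : ℝ)
  have hE := normalizingExponent_pos hδ0 hD hDn
  have hprod : ∏ n ∈ Icc 1 N, a n ^ ((n : ℝ) + δ) ≤ M ^ F :=
    prod_rpow_le_rpow_of_le_rpow (fun n _ => (hpos n).le) (fun n _ => by positivity) hM
      (fun n hn => (rpow_inv_le_iff_of_pos (hpos n).le (by linarith) (hE n)).mp (hle n hn))
      (sum_normalizingExponent_mul_le hδ0 hD hDn N)
  have hM0 : 0 ≤ M := by linarith
  calc (s ^ F * ∏ n ∈ Icc 1 N, a n ^ ((n : ℝ) + δ)) ^ q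
      ≤ (s ^ F * M ^ F) ^ q := by
        have : 0 ≤ ∏ n ∈ Icc 1 N, a n ^ ((n : ℝ) + δ) :=
          prod_nonneg fun n _ => rpow_nonneg (hpos n).le _
        gcongr
    _ = (s * M) ^ normalizingExponent δ D Dn (N + 1) := by
        rw [normalizingExponent_succ hN, rpow_mul (mul_nonneg hs hM0) F q, mul_rpow hs hM0]
    _ < a (N + 1) :=
        (lt_rpow_inv_iff_of_pos (by positivity) (hpos _).le (hE _)).mp hlt

theorem stmt10_general (δ : ℝ) (hδ0 : 0 ≤ δ) (D : ℕ) (hD : 1 ≤ D)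
    (Dn : ℕ → ℕ) (hDn : ∀ n, 1 ≤ Dn n)
    (a : ℕ → ℝ) (hpos : ∀ n, 0 < a n)
    (hlim : Filter.limsup
        (fun n : ℕ =>
          ((a n ^ ((D : ℝ) ^ n * Real.Gamma ((n : ℝ) + δ + 1) *
              ∏ i ∈ Finset.Ico 1 n, (Dn i : ℝ))⁻¹ : ℝ) : EReal))
        Filter.atTop = ⊤) :
    {N : ℕ | ∃ h1 : 1 ≤ N,
      a (N + 1) ^ ((D : ℝ) ^ (N + 1) * Real.Gamma ((N : ℝ) + 1 + δ + 1) *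
            ∏ i ∈ Finset.Ico 1 (N + 1), (Dn i : ℝ))⁻¹ >
          (1 + 1 / (N : ℝ) ^ 2) *
            (Finset.Icc 1 N).sup' (Finset.nonempty_Icc.mpr h1)
              (fun n => a n ^ ((D : ℝ) ^ n * Real.Gamma ((n : ℝ) + δ + 1) *
                ∏ i ∈ Finset.Ico 1 n, (Dn i : ℝ))⁻¹) ∧
      a (N + 1) >
        ((1 + 1 / (N : ℝ) ^ 2) ^ ((D : ℝ) ^ N * Real.Gamma ((N : ℝ) + 1 + δ + 1) *
              ∏ i ∈ Finset.Ico 1 N, (Dn i : ℝ)) *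
            ∏ n ∈ Finset.Icc 1 N, a n ^ ((n : ℝ) + δ)) ^ ((D * Dn N : ℕ) : ℝ)}.Infinite := by
  set b : ℕ → ℝ := fun n => a n ^ (normalizingExponent δ D Dn n)⁻¹
  have hunb : ∀ C, ∃ᶠ n in atTop, C < b n := frequently_lt_of_limsup_coe_eq_top hlim
  obtain ⟨m, hbm, hm1⟩ := ((hunb 1).and_eventually (eventually_ge_atTop 1)).exists
  have hjumps := infinite_setOf_one_add_inv_sq_mul_sup'_lt
    (fun n => (rpow_pos_of_pos (hpos n) _).le) hunb
  refine (hjumps.sdiff (Set.finite_lt_nat m)).mono ?_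
  rintro N ⟨⟨h1, hjump⟩, hmN : ¬N < m⟩
  have hM1 : 1 ≤ (Icc 1 N).sup' (nonempty_Icc.mpr h1) b :=
    hbm.le.trans (le_sup' b (mem_Icc.mpr ⟨hm1, not_lt.mp hmN⟩))
  refine ⟨h1, ?_, rpow_mul_prod_rpow_lt_of_mul_lt hδ0 hD hDn hpos h1 (by positivity) hM1
    (fun n hn => le_sup' b hn) hjump⟩
  convert hjump using 4 <;> simp [normalizingExponent]

/-- large-jump lemma for sequences whose normalized roots
`a_n^{1/(D^n (n+δ)! ∏_{i<n} D_i)}` are unbounded, where `(n+δ)! = Γ(n+δ+1)`. -/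
theorem stmt10 (δ : ℝ) (hδ0 : 0 ≤ δ) (hδ1 : δ < 1) (D : ℕ) (hD : 1 ≤ D)
    (Dn : ℕ → ℕ) (hDn : ∀ n, 1 ≤ Dn n)
    (a : ℕ → ℝ) (hpos : ∀ n, 0 < a n) (hmono : Monotone a)
    (hlim : Filter.limsup
        (fun n : ℕ =>
          ((a n ^ ((D : ℝ) ^ n * Real.Gamma ((n : ℝ) + δ + 1) *
              ∏ i ∈ Finset.Ico 1 n, (Dn i : ℝ))⁻¹ : ℝ) : EReal))
        Filter.atTop = ⊤) :
    {N : ℕ | ∃ h1 : 1 ≤ N,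
      a (N + 1) ^ ((D : ℝ) ^ (N + 1) * Real.Gamma ((N : ℝ) + 1 + δ + 1) *
            ∏ i ∈ Finset.Ico 1 (N + 1), (Dn i : ℝ))⁻¹ >
          (1 + 1 / (N : ℝ) ^ 2) *
            (Finset.Icc 1 N).sup' (Finset.nonempty_Icc.mpr h1)
              (fun n => a n ^ ((D : ℝ) ^ n * Real.Gamma ((n : ℝ) + δ + 1) *
                ∏ i ∈ Finset.Ico 1 n, (Dn i : ℝ))⁻¹) ∧
      a (N + 1) >
        ((1 + 1 / (N : ℝ) ^ 2) ^ ((D : ℝ) ^ N * Real.Gamma ((N : ℝ) + 1 + δ + 1) *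
              ∏ i ∈ Finset.Ico 1 N, (Dn i : ℝ)) *
            ∏ n ∈ Finset.Icc 1 N, a n ^ ((n : ℝ) + δ)) ^ ((D * Dn N : ℕ) : ℝ)}.Infinite :=
  stmt10_general δ hδ0 D hD Dn hDn a hpos hlim
end

section
/- Let ε > 0 and let (a_n) be an increasing sequence of real numbers, eventually ≥ n^{1+ε}, such that a_n > 2^n for all n in each of infinitely many disjoint integer intervals [t, k]. Then for all sufficiently large such t, ∑_{n=t}^{k} a_n^{−1 + 1/(log log a_n)^{3+ε}} < a_t^{−1 + 1/(log log a_t)^{3+ε/2}}. -/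
/-!
Put `L = log log a_T` and `δ = L ^ -(3 + ε/2)`. Once `L ^ (ε/2) ≥ 2`, monotonicity of `a` makes
every exponent on `[T, K]` at most `-1 + δ - δ/2`, so the `n`-th term is at most
`a_T ^ (-1 + δ) * a_n ^ (-δ/2)`. Splitting `a_n ^ (-δ/2) ≤ a_T ^ (-δ/4) * 2 ^ (-nδ/4)` (using
`a_n > 2^n`) bounds the remaining sum by a geometric series, `a_T ^ (-δ/4) / (1 - 2 ^ (-δ/4))`,
which is `< 1` because `log a_T = e^L` beats every power of `L`. Finally `L → ∞` along the
intervals, since `t_j ≥ j`.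
-/

open Filter Real Finset

lemma half_le_one_sub_two_rpow_neg {x : ℝ} (hx0 : 0 ≤ x) (hx1 : x ≤ 1) :
    x / 2 ≤ 1 - (2 : ℝ) ^ (-x) := by
  have h := rpow_one_add_le_one_add_mul_self (s := -(1 / 2)) (by norm_num) hx0 hx1
  rw [rpow_neg zero_le_two, ← inv_rpow zero_le_two]
  norm_num at h ⊢
  linarith

lemma sum_Icc_rpow_neg_le {a : ℕ → ℝ} (hmono : Monotone a) {T K : ℕ} (hTK : T ≤ K)
    (hbig : ∀ n ∈ Icc T K, (2 : ℝ) ^ n < a n) {x : ℝ} (hx : 0 < x) :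
    ∑ n ∈ Icc T K, a n ^ (-(2 * x)) ≤ a T ^ (-x) / (1 - (2 : ℝ) ^ (-x)) := by
  set r : ℝ := (2 : ℝ) ^ (-x)
  have haT : 0 < a T := (pow_pos two_pos T).trans (hbig T (left_mem_Icc.2 hTK))
  have hr0 : 0 ≤ r := rpow_nonneg zero_le_two _
  have hr1 : r < 1 := rpow_lt_one_of_one_lt_of_neg one_lt_two (neg_neg_of_pos hx)
  have hterm : ∀ n ∈ Icc T K, a n ^ (-(2 * x)) ≤ a T ^ (-x) * r ^ n := by
    intro n hn
    have h2n : (0 : ℝ) < 2 ^ n := pow_pos two_pos n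
    calc a n ^ (-(2 * x)) = a n ^ (-x) * a n ^ (-x) := by
          rw [← rpow_add (h2n.trans (hbig n hn))]; ring_nf
      _ ≤ a T ^ (-x) * ((2 : ℝ) ^ n) ^ (-x) :=
          mul_le_mul (rpow_le_rpow_of_nonpos haT (hmono (mem_Icc.1 hn).1) (by linarith))
            (rpow_le_rpow_of_nonpos h2n (hbig n hn).le (by linarith))
            (rpow_nonneg (h2n.trans (hbig n hn)).le _) (rpow_nonneg haT.le _)
      _ = a T ^ (-x) * r ^ n := by
          rw [← rpow_natCast, ← rpow_mul zero_le_two, mul_comm (n : ℝ),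
            rpow_mul_natCast zero_le_two]
  calc ∑ n ∈ Icc T K, a n ^ (-(2 * x)) ≤ ∑ n ∈ Icc T K, a T ^ (-x) * r ^ n := sum_le_sum hterm
    _ = a T ^ (-x) * ∑ n ∈ Ico T (K + 1), r ^ n := by rw [← mul_sum, Ico_add_one_right_eq_Icc]
    _ ≤ a T ^ (-x) * (r ^ T / (1 - r)) := by gcongr; exact geom_sum_Ico_le_of_lt_one hr0 hr1
    _ ≤ a T ^ (-x) / (1 - r) := by
          rw [mul_div_assoc']
          gcongr
          exact mul_le_of_le_one_right (rpow_nonneg haT.le _) (pow_le_one₀ hr0 hr1.le)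

lemma sum_Icc_rpow_lt {a : ℕ → ℝ} (hmono : Monotone a) {T K : ℕ} (hTK : T ≤ K)
    (hbig : ∀ n ∈ Icc T K, (2 : ℝ) ^ n < a n) {e : ℕ → ℝ} {δ : ℝ} (hδ0 : 0 < δ) (hδ1 : δ ≤ 1)
    (he : ∀ n ∈ Icc T K, e n ≤ δ / 2) (hsmall : a T ^ (-(δ / 4)) < δ / 8) :
    ∑ n ∈ Icc T K, a n ^ (-1 + e n) < a T ^ (-1 + δ) := by
  have haT : 0 < a T := (pow_pos two_pos T).trans (hbig T (left_mem_Icc.2 hTK))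
  have hterm : ∀ n ∈ Icc T K,
      a n ^ (-1 + e n) ≤ a T ^ (-1 + δ) * a n ^ (-(2 * (δ / 4))) := by
    intro n hn
    have ha1 : 1 ≤ a n := (one_le_pow₀ one_le_two).trans (hbig n hn).le
    calc a n ^ (-1 + e n) ≤ a n ^ ((-1 + δ) + -(2 * (δ / 4))) :=
          rpow_le_rpow_of_exponent_le ha1 (by linarith [he n hn])
      _ = a n ^ (-1 + δ) * a n ^ (-(2 * (δ / 4))) := rpow_add (by linarith) _ _
      _ ≤ a T ^ (-1 + δ) * a n ^ (-(2 * (δ / 4))) :=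
          mul_le_mul_of_nonneg_right
            (rpow_le_rpow_of_nonpos haT (hmono (mem_Icc.1 hn).1) (by linarith))
            (rpow_nonneg (by linarith) _)
  have hratio : a T ^ (-(δ / 4)) / (1 - (2 : ℝ) ^ (-(δ / 4))) < 1 := by
    have h := half_le_one_sub_two_rpow_neg (x := δ / 4) (by positivity) (by linarith)
    rw [div_lt_one (by linarith)]
    linarith
  calc ∑ n ∈ Icc T K, a n ^ (-1 + e n)
      ≤ ∑ n ∈ Icc T K, a T ^ (-1 + δ) * a n ^ (-(2 * (δ / 4))) := sum_le_sum hterm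
    _ = a T ^ (-1 + δ) * ∑ n ∈ Icc T K, a n ^ (-(2 * (δ / 4))) := (mul_sum _ _ _).symm
    _ ≤ a T ^ (-1 + δ) * (a T ^ (-(δ / 4)) / (1 - (2 : ℝ) ^ (-(δ / 4)))) := by
          gcongr
          exact sum_Icc_rpow_neg_le hmono hTK hbig (by positivity)
    _ < a T ^ (-1 + δ) := mul_lt_of_lt_one_right (rpow_pos_of_pos haT _) hratio

lemma eventually_exp_neg_exp_div_rpow_lt (s : ℝ) :
    ∀ᶠ L : ℝ in atTop, exp (-(exp L / L ^ s / 4)) < 1 / L ^ s / 8 := by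
  filter_upwards [eventually_ge_atTop 1,
    (tendsto_exp_div_rpow_atTop (s + 1)).eventually_gt_atTop (4 * (log 8 + |s|))]
    with L hL1 hL
  have hL0 : 0 < L := one_pos.trans_le hL1
  have hLs : 0 < L ^ s := rpow_pos_of_pos hL0 s
  have hlogL : s * log L ≤ |s| * L := by
    have := log_le_sub_one_of_pos hL0
    have := log_nonneg hL1
    nlinarith [le_abs_self s, abs_nonneg s]
  have hdiv : exp L / L ^ s / 4 = exp L / L ^ (s + 1) * L / 4 := by
    rw [rpow_add_one hL0.ne']
    field_simp
  have hrhs : 1 / L ^ s / 8 = exp (-log (8 * L ^ s)) := by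
    rw [exp_neg, exp_log (by positivity)]
    ring
  rw [hrhs, exp_lt_exp, neg_lt_neg_iff, log_mul (by norm_num) hLs.ne', log_rpow hL0, hdiv]
  have hlog8 : 0 < log 8 := log_pos (by norm_num)
  nlinarith

lemma sum_Icc_rpow_loglog_lt {ε : ℝ} (hε : 0 < ε) {a : ℕ → ℝ} (hmono : Monotone a)
    {T K : ℕ} (hTK : T ≤ K) (hbig : ∀ n ∈ Icc T K, (2 : ℝ) ^ n < a n)
    (hL1 : 1 ≤ log (log (a T))) (hL2 : 2 ≤ log (log (a T)) ^ (ε / 2))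
    (hL3 : exp (-(exp (log (log (a T))) / log (log (a T)) ^ (3 + ε / 2) / 4))
      < 1 / log (log (a T)) ^ (3 + ε / 2) / 8) :
    ∑ n ∈ Icc T K, a n ^ (-1 + 1 / log (log (a n)) ^ (3 + ε))
      < a T ^ (-1 + 1 / log (log (a T)) ^ (3 + ε / 2)) := by
  set L := log (log (a T))
  have haT : 1 < a T := (one_le_pow₀ one_le_two).trans_lt (hbig T (left_mem_Icc.2 hTK))
  have hlogaT : 0 < log (a T) := log_pos haT
  have hL0 : 0 < L := one_pos.trans_le hL1
  have hLs : 1 ≤ L ^ (3 + ε / 2) := one_le_rpow hL1 (by positivity)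
  refine sum_Icc_rpow_lt hmono hTK hbig (by positivity) ((div_le_one (by positivity)).2 hLs)
    (fun n hn => ?_) ?_
  · have hLn : L ≤ log (log (a n)) :=
      log_le_log hlogaT (log_le_log (zero_lt_one.trans haT) (hmono (mem_Icc.1 hn).1))
    calc 1 / log (log (a n)) ^ (3 + ε) ≤ 1 / L ^ (3 + ε) := by
          gcongr
      _ = 1 / (L ^ (3 + ε / 2) * L ^ (ε / 2)) := by
          rw [← rpow_add hL0]; ring_nf
      _ ≤ 1 / L ^ (3 + ε / 2) / 2 := by
          rw [div_div]; gcongr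
  · rw [rpow_def_of_pos (zero_lt_one.trans haT), ← exp_log hlogaT]
    convert hL3 using 2
    ring

theorem stmt17_general (ε : ℝ) (hε : 0 < ε) (a : ℕ → ℝ) (hmono : Monotone a)
    (t k : ℕ → ℕ) (htk : ∀ j, t j ≤ k j) (hdisj : ∀ j, k j < t (j + 1))
    (hbig : ∀ j, ∀ n ∈ Finset.Icc (t j) (k j), (2 : ℝ) ^ n < a n) :
    ∀ᶠ j : ℕ in Filter.atTop,
      (∑ n ∈ Finset.Icc (t j) (k j),
          a n ^ (-1 + 1 / Real.log (Real.log (a n)) ^ (3 + ε)))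
        < a (t j) ^ (-1 + 1 / Real.log (Real.log (a (t j))) ^ (3 + ε / 2)) := by
  have ht : Tendsto t atTop atTop :=
    (strictMono_nat_of_lt_succ fun j => (htk j).trans_lt (hdisj j)).tendsto_atTop
  have ha : Tendsto (fun j => a (t j)) atTop atTop :=
    tendsto_atTop_mono (fun j => (hbig j (t j) (left_mem_Icc.2 (htk j))).le)
      ((tendsto_pow_atTop_atTop_of_one_lt one_lt_two).comp ht)
  have hL := tendsto_log_atTop.comp (tendsto_log_atTop.comp ha)
  filter_upwards [hL.eventually_ge_atTop 1,
    hL.eventually ((tendsto_rpow_atTop (half_pos hε)).eventually_ge_atTop 2),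
    hL.eventually (eventually_exp_neg_exp_div_rpow_lt (3 + ε / 2))] with j hL1 hL2 hL3
  exact sum_Icc_rpow_loglog_lt hε hmono (htk j) (hbig j) hL1 hL2 hL3

/-- finite-interval tail estimate on infinitely many disjoint intervals
`[t j, k j]` on which `a n > 2 ^ n`. -/
theorem stmt17 (ε : ℝ) (hε : 0 < ε) (a : ℕ → ℝ) (hmono : Monotone a)
    (hev : ∀ᶠ n : ℕ in Filter.atTop, (n : ℝ) ^ (1 + ε) ≤ a n)
    (t k : ℕ → ℕ) (htk : ∀ j, t j ≤ k j) (hdisj : ∀ j, k j < t (j + 1))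
    (hbig : ∀ j, ∀ n ∈ Finset.Icc (t j) (k j), (2 : ℝ) ^ n < a n) :
    ∀ᶠ j : ℕ in Filter.atTop,
      (∑ n ∈ Finset.Icc (t j) (k j),
          a n ^ (-1 + 1 / Real.log (Real.log (a n)) ^ (3 + ε)))
        < a (t j) ^ (-1 + 1 / Real.log (Real.log (a (t j))) ^ (3 + ε / 2)) :=
  stmt17_general ε hε a hmono t k htk hdisj hbig
end
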